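/- arXiv:1103.4435 — 3 statements merged into one kernel-verified Lean document; each statement's English description precedes it below -/
import Mathlib

section
/- Let q be a prime, n ≥ 1, d ≥ 2, r ≥ 0, m ≥ 1, let T* be a fixed (n;d)-tensor over 𝔽_q of rank at most r, and let M^{(1)},…,M^{(m)} be i.i.d. uniformly distributed (n;d)-tensors over 𝔽_q. Then the probability of the error event E — that there exists a tensor T ≠ T* of rank at most r with y_T = y_{T*} — satisfies Pr(E) ≤ q^{−(m − n·r·d)}. -/
/-!
Write each tensor of rank at most `r` as `Σ_i u_i^{(1)} ⊗ ⋯ ⊗ u_i^{(d)}`; there are `q^{nrd}`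
choices of the factors `u`. An error means that for some `u` the tensor `S = T_u − T*` is nonzero
while `⟨M^{(k)}, S⟩ = 0` for all `k`. For a fixed `S ≠ 0` the functional `M ↦ ⟨M, S⟩` maps onto
`𝔽_q`, so its kernel is a `1/q` fraction of all tensors and the `m` independent sensing tensors all
lie in it with probability `q^{-m}`. A union bound over `u` gives `q^{nrd} · q^{-m}`.
-/

/-- An `(n;d)`-tensor over `𝔽_q`: a map `[n]^d → 𝔽_q`. -/
abbrev Tensor (q n d : ℕ) := (Fin d → Fin n) → ZMod q

/-- `T` has rank at most `r` if it is a sum of `r` outer products of vectors. -/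
def rankLE (q n d r : ℕ) (T : Tensor q n d) : Prop :=
  ∃ u : Fin r → Fin d → (Fin n → ZMod q),
    ∀ idx : Fin d → Fin n, T idx = ∑ i : Fin r, ∏ j : Fin d, u i j (idx j)

/-- The tensor inner product `⟨M, T⟩ = Σ_idx M(idx)·T(idx)`. -/
def tinner {q n d : ℕ} [Fact q.Prime] (M T : Tensor q n d) : ZMod q :=
  ∑ idx : Fin d → Fin n, M idx * T idx

open Matrix

theorem AddMonoidHom.card_ker_mul_card_of_surjective {G H : Type*} [AddGroup G] [AddGroup H]
    (f : G →+ H) (hf : Function.Surjective f) :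
    Nat.card f.ker * Nat.card H = Nat.card G := by
  rw [← AddSubgroup.card_mul_index f.ker, AddSubgroup.index_ker,
    f.range_eq_top_of_surjective hf, AddSubgroup.card_top]

section DotProduct

variable {K ι κ : Type*} [Field K] [Fintype ι]

theorem dotProduct_left_surjective {S : ι → K} (hS : S ≠ 0) :
    Function.Surjective (· ⬝ᵥ S) := by
  classical
  obtain ⟨i, hi⟩ := Function.ne_iff.mp hS
  intro y
  refine ⟨Pi.single i (y * (S i)⁻¹), ?_⟩
  simp [single_dotProduct, inv_mul_cancel_right₀ hi]

theorem card_dotProduct_eq_zero_mul_card {S : ι → K} (hS : S ≠ 0) :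
    Nat.card {v : ι → K // v ⬝ᵥ S = 0} * Nat.card K = Nat.card (ι → K) :=
  (AddMonoidHom.mk' (· ⬝ᵥ S) fun v w => add_dotProduct v w S).card_ker_mul_card_of_surjective
    (dotProduct_left_surjective hS)

theorem card_forall_dotProduct_eq_zero_mul_card [Fintype κ] {S : ι → K} (hS : S ≠ 0) :
    Nat.card {M : κ → ι → K // ∀ k, M k ⬝ᵥ S = 0} * Nat.card K ^ Fintype.card κ =
      Nat.card (κ → ι → K) := by
  rw [Nat.card_congr (Equiv.subtypePiEquivPi (p := fun _ v => v ⬝ᵥ S = 0)), Nat.card_pi,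
    Nat.card_pi (β := fun _ => ι → K), Finset.prod_const, Finset.prod_const, Finset.card_univ,
    ← mul_pow, card_dotProduct_eq_zero_mul_card hS]

theorem card_exists_forall_dotProduct_eq_zero_mul_card_le [Fintype κ] [Finite K] {U : Type*}
    [Fintype U] (S : U → ι → K) (hS : ∀ u, S u ≠ 0) :
    Nat.card {M : κ → ι → K // ∃ u, ∀ k, M k ⬝ᵥ S u = 0} * Nat.card K ^ Fintype.card κ ≤
      Fintype.card U * Nat.card (κ → ι → K) := by
  classical
  have : Fintype K := Fintype.ofFinite K
  have hunion : (Finset.univ.filter fun M : κ → ι → K => ∃ u, ∀ k, M k ⬝ᵥ S u = 0) =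
      Finset.univ.biUnion fun u => Finset.univ.filter fun M => ∀ k, M k ⬝ᵥ S u = 0 := by
    ext M; simp
  calc Nat.card {M : κ → ι → K // ∃ u, ∀ k, M k ⬝ᵥ S u = 0} * Nat.card K ^ Fintype.card κ
      ≤ (∑ u, Nat.card {M : κ → ι → K // ∀ k, M k ⬝ᵥ S u = 0}) * Nat.card K ^ Fintype.card κ := by
        gcongr
        simp only [Nat.card_eq_fintype_card, Fintype.card_subtype, hunion]
        exact Finset.card_biUnion_le
    _ = Fintype.card U * Nat.card (κ → ι → K) := by
        simp only [Finset.sum_mul, card_forall_dotProduct_eq_zero_mul_card (hS _), Finset.sum_const,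
          Finset.card_univ, smul_eq_mul]

end DotProduct

theorem div_le_zpow_of_mul_le {q X N a m : ℕ} (hq : 0 < q) (h : X * q ^ m ≤ q ^ a * N) :
    (X : ℝ) / N ≤ (q : ℝ) ^ (-((m : ℤ) - a)) := by
  rw [neg_sub, zpow_sub₀ (by positivity), zpow_natCast, zpow_natCast]
  rcases N.eq_zero_or_pos with rfl | hN
  · simp only [CharP.cast_eq_zero, div_zero]
    positivity
  rw [div_le_div_iff₀ (by positivity) (by positivity)]
  exact_mod_cast h

def sumOuterProducts {q n d r : ℕ} (u : Fin r → Fin d → Fin n → ZMod q) : Tensor q n d :=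
  fun idx => ∑ i, ∏ j, u i j (idx j)

theorem rankLE.exists_sumOuterProducts_eq {q n d r : ℕ} {T : Tensor q n d}
    (hT : rankLE q n d r T) : ∃ u : Fin r → Fin d → Fin n → ZMod q, sumOuterProducts u = T :=
  let ⟨u, hu⟩ := hT
  ⟨u, funext fun idx => (hu idx).symm⟩

theorem tinner_eq_dotProduct {q n d : ℕ} [Fact q.Prime] (M T : Tensor q n d) :
    tinner M T = M ⬝ᵥ T := rfl

theorem card_error_mul_le (q n d r m : ℕ) [Fact q.Prime] (Tstar : Tensor q n d) :
    Nat.card {M : Fin m → Tensor q n d //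
        ∃ T : Tensor q n d, T ≠ Tstar ∧ rankLE q n d r T ∧
          ∀ k, tinner (M k) T = tinner (M k) Tstar} * q ^ m ≤
      q ^ (n * r * d) * Nat.card (Fin m → Tensor q n d) := by
  let U := {u : Fin r → Fin d → Fin n → ZMod q // sumOuterProducts u ≠ Tstar}
  let S : U → Tensor q n d := fun u => sumOuterProducts u.1 - Tstar
  have hS : ∀ u, S u ≠ 0 := fun u => sub_ne_zero.mpr u.2
  have hsub : Nat.card {M : Fin m → Tensor q n d //
        ∃ T : Tensor q n d, T ≠ Tstar ∧ rankLE q n d r T ∧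
          ∀ k, tinner (M k) T = tinner (M k) Tstar} ≤
      Nat.card {M : Fin m → Tensor q n d // ∃ u, ∀ k, M k ⬝ᵥ S u = 0} := by
    refine Finite.card_le_of_embedding (Subtype.impEmbedding _ _ fun M ⟨T, hne, hT, hM⟩ => ?_)
    obtain ⟨u, rfl⟩ := hT.exists_sumOuterProducts_eq
    exact ⟨⟨u, hne⟩, fun k => by simp [S, dotProduct_sub, ← tinner_eq_dotProduct, hM k]⟩
  have hU : Fintype.card U ≤ q ^ (n * r * d) := by
    refine (Fintype.card_subtype_le _).trans_eq ?_
    simp only [Fintype.card_pi, ZMod.card, Finset.prod_const, Finset.card_univ, Fintype.card_fin]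
    ring
  have hunion := card_exists_forall_dotProduct_eq_zero_mul_card_le (κ := Fin m) S hS
  rw [Nat.card_zmod, Fintype.card_fin] at hunion
  calc _ ≤ _ := Nat.mul_le_mul_right _ hsub
    _ ≤ _ := hunion
    _ ≤ _ := Nat.mul_le_mul_right _ hU

theorem prob_error_le_general (q n d r m : ℕ) [Fact q.Prime]
    (Tstar : Tensor q n d) :
    (Nat.card {M : Fin m → Tensor q n d //
        ∃ T : Tensor q n d, T ≠ Tstar ∧ rankLE q n d r T ∧
          ∀ k, tinner (M k) T = tinner (M k) Tstar} : ℝ) /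
        Fintype.card (Fin m → Tensor q n d)
      ≤ (q : ℝ) ^ (-((m : ℤ) - (n : ℤ) * r * d)) := by
  have h := div_le_zpow_of_mul_le (Fact.out : q.Prime).pos (card_error_mul_le q n d r m Tstar)
  rwa [Nat.card_eq_fintype_card (α := Fin m → Tensor q n d), Nat.cast_mul, Nat.cast_mul] at h

/-- For a fixed tensor `T*` of rank at most `r` and i.i.d. uniform sensing tensors
`M⁽¹⁾,…,M⁽ᵐ⁾` (modelled by the uniform distribution on `Fin m → Tensor q n d`), the
probability of the error event `E` — that some `T ≠ T*` of rank at most `r` has the same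
measurement vector `y_T = y_{T*}` — is at most `q^(−(m − n·r·d))`. -/
theorem prob_error_le (q n d r m : ℕ) [Fact q.Prime]
    (hn : 1 ≤ n) (hd : 2 ≤ d) (hm : 1 ≤ m)
    (Tstar : Tensor q n d) (hTstar : rankLE q n d r Tstar) :
    (Nat.card {M : Fin m → Tensor q n d //
        ∃ T : Tensor q n d, T ≠ Tstar ∧ rankLE q n d r T ∧
          ∀ k, tinner (M k) T = tinner (M k) Tstar} : ℝ) /
        Fintype.card (Fin m → Tensor q n d)
      ≤ (q : ℝ) ^ (-((m : ℤ) - (n : ℤ) * r * d)) :=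
  prob_error_le_general q n d r m Tstar
end

section
/- (Achievability, noise-free.) Fix a prime q, integers d ≥ 2 and r ≥ 1, and a real constant C₁ > 1. For each n ≥ 1, let T*_n be any (n;d)-tensor over 𝔽_q of rank at most r, let m(n) be an integer with m(n) ≥ C₁·n·r·d, and let M^{(1)},…,M^{(m(n))} be i.i.d. uniformly distributed (n;d)-tensors over 𝔽_q. Let E_n be the event that some tensor T ≠ T*_n of rank at most r satisfies y_T = y_{T*_n}. Then Pr(E_n) → 0 as n → ∞. -/
open Finset


lemma tinner_sub {q n d : ℕ} [Fact q.Prime] (M T T' : Tensor q n d) :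
    tinner M (T - T') = tinner M T - tinner M T' := by
  simp [tinner, Pi.sub_apply, mul_sub, Finset.sum_sub_distrib]

lemma card_match_le (q n d : ℕ) [Fact q.Prime] (T T' : Tensor q n d) (hTT' : T ≠ T') :
    (univ.filter fun M : Tensor q n d => tinner M T = tinner M T').card ≤ q ^ (n ^ d - 1) := by
  classical
  set D : Tensor q n d := T - T' with hD
  have hDne : D ≠ 0 := sub_ne_zero.2 hTT'
  obtain ⟨idx0, hidx0⟩ : ∃ idx0, D idx0 ≠ 0 := by
    by_contra h
    push_neg at h
    exact hDne (funext h)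
  have hcond : ∀ M : Tensor q n d, (tinner M T = tinner M T') ↔ tinner M D = 0 := by
    intro M
    rw [hD, tinner_sub, sub_eq_zero]
  have hinj : Set.InjOn (fun (M : Tensor q n d) (i : {idx : Fin d → Fin n // idx ≠ idx0}) => M i.1)
      (univ.filter fun M : Tensor q n d => tinner M T = tinner M T') := by
    intro M hM M' hM' hMM'
    simp only [mem_coe, mem_filter, mem_univ, true_and] at hM hM'
    rw [hcond] at hM hM'
    have hrest : ∀ idx, idx ≠ idx0 → M idx = M' idx := fun idx h =>
      congrFun hMM' ⟨idx, h⟩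
    funext idx
    by_cases h : idx = idx0
    · subst h
      have h1 : tinner M D = M idx * D idx + ∑ j ∈ univ.erase idx, M j * D j :=
        (Finset.add_sum_erase _ (fun j => M j * D j) (mem_univ idx)).symm
      have h2 : tinner M' D = M' idx * D idx + ∑ j ∈ univ.erase idx, M' j * D j :=
        (Finset.add_sum_erase _ (fun j => M' j * D j) (mem_univ idx)).symm
      have hsum : ∑ j ∈ univ.erase idx, M j * D j = ∑ j ∈ univ.erase idx, M' j * D j := by
        refine Finset.sum_congr rfl fun j hj => ?_
        rw [hrest j (Finset.ne_of_mem_erase hj)]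
      have : M idx * D idx = M' idx * D idx := by
        have := h1.symm.trans (hM.trans (hM'.symm.trans h2))
        rw [hsum] at this
        exact add_right_cancel this
      exact mul_right_cancel₀ hidx0 this
    · exact hrest idx h
  have hle := Finset.card_le_card_of_injOn _ (fun M _ => Finset.mem_univ _) hinj
  refine hle.trans ?_
  rw [Finset.card_univ]
  have h1 : Fintype.card {idx : Fin d → Fin n // idx ≠ idx0} = n ^ d - 1 := by
    simp [Fintype.card_subtype_compl]
  rw [Fintype.card_fun, h1, ZMod.card]


lemma card_rankLE_le (q n d r : ℕ) [Fact q.Prime] [DecidablePred (rankLE q n d r)] :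
    (univ.filter fun T : Tensor q n d => rankLE q n d r T).card ≤ q ^ (n * r * d) := by
  classical
  set Φ : (Fin r → Fin d → (Fin n → ZMod q)) → Tensor q n d :=
    fun u idx => ∑ i : Fin r, ∏ j : Fin d, u i j (idx j) with hΦ
  have hsub : (univ.filter fun T : Tensor q n d => rankLE q n d r T) ⊆
      (univ : Finset (Fin r → Fin d → (Fin n → ZMod q))).image Φ := by
    intro T hT
    simp only [mem_filter, mem_univ, true_and] at hT
    obtain ⟨u, hu⟩ := hT
    exact Finset.mem_image.2 ⟨u, mem_univ _, (funext fun idx => (hu idx).symm)⟩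
  refine (Finset.card_le_card hsub).trans ?_
  refine (Finset.card_image_le).trans ?_
  rw [Finset.card_univ]
  have : Fintype.card (Fin r → Fin d → (Fin n → ZMod q)) = q ^ (n * d * r) := by
    simp [Fintype.card_fun, ZMod.card, ← pow_mul]
  rw [this]
  have : n * d * r = n * r * d := by ring
  rw [this]

lemma bad_card_le (q n d r : ℕ) [Fact q.Prime] (m : ℕ) (Tst : Tensor q n d) :
    Nat.card {M : Fin m → Tensor q n d //
        ∃ T : Tensor q n d, T ≠ Tst ∧ rankLE q n d r T ∧
          ∀ k, tinner (M k) T = tinner (M k) Tst}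
      ≤ q ^ (n * r * d) * (q ^ (n ^ d - 1)) ^ m := by
  classical
  rw [Nat.card_eq_fintype_card, Fintype.card_subtype]
  set R : Finset (Tensor q n d) :=
    univ.filter (fun T : Tensor q n d => T ≠ Tst ∧ rankLE q n d r T) with hR
  set A : Tensor q n d → Finset (Fin m → Tensor q n d) :=
    fun T => univ.filter (fun M => ∀ k, tinner (M k) T = tinner (M k) Tst) with hA
  have hsub : (univ.filter fun M : Fin m → Tensor q n d =>
      ∃ T : Tensor q n d, T ≠ Tst ∧ rankLE q n d r T ∧
        ∀ k, tinner (M k) T = tinner (M k) Tst) ⊆ R.biUnion A := by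
    intro M hM
    simp only [mem_filter, mem_univ, true_and] at hM
    obtain ⟨T, h1, h2, h3⟩ := hM
    refine Finset.mem_biUnion.2 ⟨T, ?_, ?_⟩
    · simp [hR, h1, h2]
    · simp [hA, h3]
  refine (Finset.card_le_card hsub).trans ?_
  refine (Finset.card_biUnion_le).trans ?_
  have hAcard : ∀ T ∈ R, (A T).card ≤ (q ^ (n ^ d - 1)) ^ m := by
    intro T hT
    simp only [hR, mem_filter, mem_univ, true_and] at hT
    have hcardA : (A T).card =
        (univ.filter fun M1 : Tensor q n d => tinner M1 T = tinner M1 Tst).card ^ m := by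
      rw [hA, ← Fintype.card_subtype, ← Fintype.card_subtype]
      rw [Fintype.card_congr (Equiv.subtypePiEquivPi
        (p := fun (_ : Fin m) (x : Tensor q n d) => tinner x T = tinner x Tst))]
      rw [Fintype.card_pi]
      simp
    rw [hcardA]
    exact Nat.pow_le_pow_left (card_match_le q n d T Tst hT.1) m
  calc ∑ T ∈ R, (A T).card ≤ ∑ _T ∈ R, (q ^ (n ^ d - 1)) ^ m := Finset.sum_le_sum hAcard
    _ = R.card * (q ^ (n ^ d - 1)) ^ m := by rw [Finset.sum_const, smul_eq_mul]
    _ ≤ q ^ (n * r * d) * (q ^ (n ^ d - 1)) ^ m := by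
        refine Nat.mul_le_mul_right _ ?_
        refine le_trans ?_ (card_rankLE_le q n d r)
        refine Finset.card_le_card ?_
        intro T hT
        simp only [hR, mem_filter, mem_univ, true_and] at hT ⊢
        exact hT.2

/-- **Theorem 2 (Achievability I, noise-free).** Fix a prime `q`, `d ≥ 2`, `r ≥ 1` and a
real constant `C₁ > 1`.  For each `n`, let `T*_n` be an `(n;d)`-tensor of rank at most
`r`, let `m n ≥ C₁·n·r·d`, and draw `m n` i.i.d. uniform sensing tensors (modelled by the
uniform distribution on `Fin (m n) → Tensor q n d`).  The probability of the error event
`E_n` — that some `T ≠ T*_n` of rank at most `r` matches all measurements of `T*_n` —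
tends to `0` as `n → ∞`. -/
theorem prob_error_tendsto_zero (q d r : ℕ) [Fact q.Prime] (hd : 2 ≤ d) (hr : 1 ≤ r)
    (C₁ : ℝ) (hC₁ : 1 < C₁)
    (Tstar : ∀ n : ℕ, Tensor q n d) (hTstar : ∀ n, rankLE q n d r (Tstar n))
    (m : ℕ → ℕ) (hm : ∀ n : ℕ, 1 ≤ n → (C₁ * n * r * d : ℝ) ≤ m n) :
    Filter.Tendsto
      (fun n : ℕ =>
        (Nat.card {M : Fin (m n) → Tensor q n d //
            ∃ T : Tensor q n d, T ≠ Tstar n ∧ rankLE q n d r T ∧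
              ∀ k, tinner (M k) T = tinner (M k) (Tstar n)} : ℝ) /
          Fintype.card (Fin (m n) → Tensor q n d))
      Filter.atTop (nhds 0) := by
  classical
  have hqp : q.Prime := Fact.out
  have hq2 : 2 ≤ q := hqp.two_le
  have hQ1 : (1:ℝ) < (q:ℝ) := by exact_mod_cast hq2.trans_lt' one_lt_two
  have hQ0 : (0:ℝ) < (q:ℝ) := lt_trans one_pos hQ1
  set b : ℝ := (q:ℝ) ^ (-(C₁ - 1)) with hb
  have hb0 : 0 ≤ b := Real.rpow_nonneg hQ0.le _
  have hb1 : b < 1 := Real.rpow_lt_one_of_one_lt_of_neg hQ1 (by linarith)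
  refine squeeze_zero' ?_ ?_ (tendsto_pow_atTop_nhds_zero_of_lt_one hb0 hb1)
  · filter_upwards with n
    positivity
  · rw [Filter.eventually_atTop]
    refine ⟨1, fun n hn => ?_⟩
    have hn0 : (1:ℝ) ≤ (n:ℝ) := by exact_mod_cast hn
    have hN : 1 ≤ n ^ d := Nat.one_le_pow _ _ (by omega)
    have hden : (Fintype.card (Fin (m n) → Tensor q n d) : ℝ) = (q:ℝ) ^ (n ^ d * m n) := by
      have : Fintype.card (Fin (m n) → Tensor q n d) = q ^ (n ^ d * m n) := by
        simp [Fintype.card_fun, ZMod.card, ← pow_mul]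
      rw [this]; push_cast; ring
    have hnum := bad_card_le q n d r (m n) (Tstar n)
    have hnumR : (Nat.card {M : Fin (m n) → Tensor q n d //
            ∃ T : Tensor q n d, T ≠ Tstar n ∧ rankLE q n d r T ∧
              ∀ k, tinner (M k) T = tinner (M k) (Tstar n)} : ℝ)
        ≤ (q:ℝ) ^ (n * r * d) * ((q:ℝ) ^ (n ^ d - 1)) ^ m n := by
      exact_mod_cast hnum
    have hdpos : (0:ℝ) < (q:ℝ) ^ (n ^ d * m n) := by positivity
    have step1 : (Nat.card {M : Fin (m n) → Tensor q n d //
            ∃ T : Tensor q n d, T ≠ Tstar n ∧ rankLE q n d r T ∧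
              ∀ k, tinner (M k) T = tinner (M k) (Tstar n)} : ℝ) /
          Fintype.card (Fin (m n) → Tensor q n d)
        ≤ ((q:ℝ) ^ (n * r * d) * ((q:ℝ) ^ (n ^ d - 1)) ^ m n) / (q:ℝ) ^ (n ^ d * m n) := by
      rw [hden]
      exact div_le_div_of_nonneg_right hnumR hdpos.le |>.trans_eq rfl
    have hsplit : (q:ℝ) ^ (n ^ d * m n) = ((q:ℝ) ^ (n ^ d - 1)) ^ m n * (q:ℝ) ^ m n := by
      rw [← pow_mul, ← pow_add]
      congr 1
      have : (n ^ d - 1) * m n + m n = ((n ^ d - 1) + 1) * m n := by ring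
      rw [this, Nat.sub_add_cancel hN]
    have step2 : ((q:ℝ) ^ (n * r * d) * ((q:ℝ) ^ (n ^ d - 1)) ^ m n) / (q:ℝ) ^ (n ^ d * m n)
        = (q:ℝ) ^ (n * r * d) / (q:ℝ) ^ m n := by
      rw [hsplit]
      field_simp
    have step3 : (q:ℝ) ^ (n * r * d) / (q:ℝ) ^ m n ≤ b ^ n := by
      have e1 : (q:ℝ) ^ (n * r * d) / (q:ℝ) ^ m n
          = (q:ℝ) ^ (((n * r * d : ℕ) : ℝ) - ((m n : ℕ) : ℝ)) := by
        rw [← Real.rpow_natCast (q:ℝ) (n * r * d), ← Real.rpow_natCast (q:ℝ) (m n),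
          ← Real.rpow_sub hQ0]
      have expo : ((n * r * d : ℕ) : ℝ) - ((m n : ℕ) : ℝ) ≤ -(C₁ - 1) * n := by
        have hmn := hm n hn
        have hr1 : (1:ℝ) ≤ (r:ℝ) := by exact_mod_cast hr
        have hd1 : (2:ℝ) ≤ (d:ℝ) := by exact_mod_cast hd
        push_cast
        nlinarith [mul_nonneg (mul_nonneg (sub_nonneg.2 hC₁.le) (by linarith : (0:ℝ) ≤ (n:ℝ)))
          (by nlinarith : (0:ℝ) ≤ (r:ℝ) * (d:ℝ) - 1)]
      have e2 : (q:ℝ) ^ (-(C₁ - 1) * (n:ℝ)) = b ^ n := by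
        rw [hb, ← Real.rpow_natCast ((q:ℝ) ^ (-(C₁ - 1))) n, ← Real.rpow_mul hQ0.le]
      calc (q:ℝ) ^ (n * r * d) / (q:ℝ) ^ m n
          = (q:ℝ) ^ (((n * r * d : ℕ) : ℝ) - ((m n : ℕ) : ℝ)) := e1
        _ ≤ (q:ℝ) ^ (-(C₁ - 1) * (n:ℝ)) := Real.rpow_le_rpow_of_exponent_le hQ1.le expo
        _ = b ^ n := e2
    exact step1.trans (step2.le.trans step3)
end

section
/- (Fano-type converse, noisy.) Let q be a prime, n, d, r, m ≥ 1 with |𝒯(n;d;r;q)| > 1, and ε ∈ [0,1]. Let T* be uniformly distributed on 𝒯(n;d;r;q), let M^{(1)},…,M^{(m)} be i.i.d. uniformly distributed (n;d)-tensors over 𝔽_q independent of T*, let y = y_{T*}, and let ỹ = y + z where z_1,…,z_m ∈ 𝔽_q are i.i.d., independent of (T*, M^{(1)},…,M^{(m)}), with Pr(z_k = 0) = 1 − ε and Pr(z_k = a) = ε/(q−1) for each a ≠ 0. Then for every decoding function f mapping (ỹ, M^{(1)},…,M^{(m)}) to an (n;d)-tensor, P_e = Pr( f(ỹ, M^{(1)},…,M^{(m)})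 ≠ T* ) satisfies P_e ≥ ( log₂|𝒯(n;d;r;q)| − m·(log₂ q − h₂(ε) − ε·log₂(q−1)) − 1 ) / log₂|𝒯(n;d;r;q)|. -/
open scoped Classical

/-- Probability weight of a noise symbol of the `q`-ary symmetric channel with error
probability `ε`. -/
noncomputable def noiseW (q : ℕ) [Fact q.Prime] (ε : ℝ) (z : ZMod q) : ℝ :=
  if z = 0 then 1 - ε else ε / ((q : ℝ) - 1)

/-- The binary entropy function `h₂(x) = −x·log₂ x − (1−x)·log₂(1−x)`
(with the convention `0·log₂ 0 = 0`, automatic since `Real.logb 2 0 = 0`). -/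
noncomputable def binEnt (x : ℝ) : ℝ := -(x * Real.logb 2 x) - (1 - x) * Real.logb 2 (1 - x)

/-!
For fixed sensing tensors `M`, the observation `ỹ = v(T*) + z` with `v(T)_k = ⟨M⁽ᵏ⁾, T⟩` is an
additive-noise channel with uniform input. Since `y ↦ y - v(T)` is a bijection, the joint entropy is
`H(T*, ỹ) = log |𝒯| + m H(z₁)`, while `H(ỹ) ≤ m log q`; so
`H(T* | ỹ) ≥ log |𝒯| - m (log q - H(z₁))`. Fano's inequality `H(T* | ỹ) ≤ log 2 + Pₑ log |𝒯|`
then bounds the error probability for every `M`, and averaging over `M` gives the claim.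
Entropies are computed in nats with `negMulLog` and converted to bits only at the end.
-/

open Real Finset

section Entropy

variable {ι : Type*}

theorem sum_negMulLog_le_mul_log_card_add (s : Finset ι) {p : ι → ℝ} (hp : ∀ i ∈ s, 0 ≤ p i) :
    ∑ i ∈ s, negMulLog (p i) ≤ (∑ i ∈ s, p i) * log #s + negMulLog (∑ i ∈ s, p i) := by
  rcases s.eq_empty_or_nonempty with rfl | hs
  · simp
  have hcard : (0 : ℝ) < #s := mod_cast hs.card_pos
  -- Jensen for the concave `negMulLog`, uniform weights `1/#s`, at the points `#s * p i`.
  have hjensen := concaveOn_negMulLog.le_map_sum (t := s) (w := fun _ ↦ (#s : ℝ)⁻¹)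
    (p := fun i ↦ #s * p i) (fun _ _ ↦ by positivity)
    (by rw [sum_const, nsmul_eq_mul]; field_simp)
    (fun i hi ↦ Set.mem_Ici.mpr (mul_nonneg hcard.le (hp i hi)))
  have hpoint : ∀ i ∈ s, (#s : ℝ)⁻¹ • negMulLog (#s * p i) = negMulLog (p i) - p i * log #s := by
    intro i _
    rw [negMulLog_mul, smul_eq_mul, negMulLog]
    field_simp
    ring
  have hmean : ∑ i ∈ s, (#s : ℝ)⁻¹ • ((#s : ℝ) * p i) = ∑ i ∈ s, p i :=
    sum_congr rfl fun i _ ↦ by rw [smul_eq_mul]; field_simp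
  rw [sum_congr rfl hpoint, sum_sub_distrib, ← sum_mul, hmean] at hjensen
  linarith

theorem negMulLog_add_negMulLog_le {a b : ℝ} (ha : 0 ≤ a) (hb : 0 ≤ b) :
    negMulLog a + negMulLog b ≤ negMulLog (a + b) + (a + b) * log 2 := by
  have := sum_negMulLog_le_mul_log_card_add (univ : Finset (Fin 2)) (p := ![a, b])
    (by simp [Fin.forall_fin_two, ha, hb])
  simp only [Fin.sum_univ_two, card_univ, Fintype.card_fin] at this
  norm_num at this
  linarith

theorem log_natCast_le_log_natCast {k l : ℕ} (h : k ≤ l) : log k ≤ log l := by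
  rcases k.eq_zero_or_pos with rfl | hk
  · simpa using log_natCast_nonneg l
  exact log_le_log (mod_cast hk) (mod_cast h)

/-- Fano's inequality for a single observation: if the guess is correct only on `s`, `#s ≤ 1`,
the entropy is at most one bit plus the error mass times `log |ι|`. -/
theorem sum_negMulLog_le_of_card_le_one [Fintype ι] [DecidableEq ι] {p : ι → ℝ}
    (hp : ∀ i, 0 ≤ p i) {s : Finset ι} (hs : #s ≤ 1) :
    ∑ i, negMulLog (p i) ≤
      negMulLog (∑ i, p i) + (∑ i, p i) * log 2 + (∑ i ∈ sᶜ, p i) * log (Fintype.card ι) := by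
  have hlog_s : log #s = 0 := by
    rcases Nat.le_one_iff_eq_zero_or_eq_one.mp hs with h | h <;> simp [h]
  have hin : ∑ i ∈ s, negMulLog (p i) ≤ negMulLog (∑ i ∈ s, p i) := by
    simpa [hlog_s] using sum_negMulLog_le_mul_log_card_add s fun i _ ↦ hp i
  have hout : ∑ i ∈ sᶜ, negMulLog (p i) ≤
      (∑ i ∈ sᶜ, p i) * log (Fintype.card ι) + negMulLog (∑ i ∈ sᶜ, p i) := by
    refine (sum_negMulLog_le_mul_log_card_add sᶜ fun i _ ↦ hp i).trans ?_
    gcongr _ * ?_ + _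
    · exact sum_nonneg fun i _ ↦ hp i
    · exact log_natCast_le_log_natCast (card_le_univ sᶜ)
  have hsplit := negMulLog_add_negMulLog_le (sum_nonneg fun i (_ : i ∈ s) ↦ hp i)
    (sum_nonneg fun i (_ : i ∈ sᶜ) ↦ hp i)
  rw [sum_add_sum_compl] at hsplit
  rw [← sum_add_sum_compl s]
  linarith

end Entropy

/-- Fano's inequality `H(A | Y) ≤ log 2 + Pₑ log |A|` for a joint distribution `P a y`, when `y`
is decoded as `g y` and compared with the encoding `ι a`. -/
theorem fano_inequality {α β X : Type*} [Fintype α] [Fintype β] [DecidableEq X] {P : α → β → ℝ}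
    (hP : ∀ a y, 0 ≤ P a y) (hP1 : ∑ y, ∑ a, P a y = 1) {ι : α → X}
    (hι : Function.Injective ι) (g : β → X) :
    ∑ y, ∑ a, negMulLog (P a y) - ∑ y, negMulLog (∑ a, P a y) ≤
      log 2 + (∑ y, ∑ a, if g y ≠ ι a then P a y else 0) * log (Fintype.card α) := by
  have hfano : ∀ y, ∑ a, negMulLog (P a y) ≤ negMulLog (∑ a, P a y) + (∑ a, P a y) * log 2 +
      (∑ a, if g y ≠ ι a then P a y else 0) * log (Fintype.card α) := by
    intro y
    have hcorrect : #{a | g y = ι a} ≤ 1 :=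
      card_le_one.mpr fun a ha b hb ↦ hι ((mem_filter.mp ha).2.symm.trans (mem_filter.mp hb).2)
    simpa only [← sum_filter, compl_filter] using
      sum_negMulLog_le_of_card_le_one (fun a ↦ hP a y) hcorrect
  have := sum_le_sum fun y (_ : y ∈ univ) ↦ hfano y
  rw [sum_add_distrib, sum_add_distrib, ← sum_mul, hP1, one_mul, ← sum_mul] at this
  linarith

theorem log_card_add_sum_negMulLog_le_of_additiveNoise {α Y X : Type*} [Fintype α] [Nonempty α]
    [Fintype Y] [AddCommGroup Y] [DecidableEq X] {W : Y → ℝ} (hW0 : ∀ z, 0 ≤ W z)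
    (hW1 : ∑ z, W z = 1) (v : α → Y) {ι : α → X} (hι : Function.Injective ι) (g : Y → X) :
    log (Fintype.card α) + ∑ z, negMulLog (W z) ≤ log (Fintype.card Y) + log 2 +
      ((Fintype.card α : ℝ)⁻¹ * ∑ a, ∑ z, W z * if g (v a + z) ≠ ι a then 1 else 0) *
        log (Fintype.card α) := by
  set N : ℝ := (Fintype.card α : ℝ)
  have hN : 0 < N := Nat.cast_pos.mpr Fintype.card_pos
  set P : α → Y → ℝ := fun a y ↦ N⁻¹ * W (y - v a)
  have hshift : ∀ a (F : Y → ℝ), ∑ y, F (y - v a) = ∑ z, F z :=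
    fun a F ↦ (Equiv.subRight (v a)).sum_comp F
  have hP : ∀ a y, 0 ≤ P a y := fun a y ↦ mul_nonneg (by positivity) (hW0 _)
  have hP1 : ∑ y, ∑ a, P a y = 1 := by
    rw [sum_comm]
    simp only [P, ← mul_sum, hshift _ W, hW1, mul_one, sum_const, card_univ, nsmul_eq_mul]
    exact mul_inv_cancel₀ hN.ne'
  have hjoint : ∑ y, ∑ a, negMulLog (P a y) = log N + ∑ z, negMulLog (W z) := by
    rw [sum_comm]
    simp only [P, negMulLog_mul, hshift _ (fun z ↦ W z * negMulLog N⁻¹ + N⁻¹ * negMulLog (W z)),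
      sum_add_distrib, ← sum_mul, ← mul_sum, hW1, sum_const, card_univ, nsmul_eq_mul]
    rw [negMulLog, log_inv]
    field_simp
    ring
  have hmarginal : ∑ y, negMulLog (∑ a, P a y) ≤ log (Fintype.card Y) := by
    simpa [hP1] using sum_negMulLog_le_mul_log_card_add univ (p := fun y ↦ ∑ a, P a y)
      fun y _ ↦ sum_nonneg fun a _ ↦ hP a y
  have herror : ∑ y, ∑ a, (if g y ≠ ι a then P a y else 0) =
      N⁻¹ * ∑ a, ∑ z, W z * if g (v a + z) ≠ ι a then 1 else 0 := by
    rw [sum_comm, mul_sum]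
    refine sum_congr rfl fun a _ ↦ ?_
    rw [mul_sum, ← hshift a fun z ↦ N⁻¹ * (W z * if g (v a + z) ≠ ι a then 1 else 0)]
    simp only [P, add_sub_cancel, mul_ite, mul_one, mul_zero]
  have := fano_inequality hP hP1 hι g
  rw [hjoint, herror] at this
  linarith

theorem sum_negMulLog_prod_pi {α : Type*} [Fintype α] {w : α → ℝ} (hw : ∑ a, w a = 1)
    (m : ℕ) :
    ∑ z : Fin m → α, negMulLog (∏ k, w (z k)) = m * ∑ a, negMulLog (w a) := by
  induction m with
  | zero => simp
  | succ m ih =>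
    rw [← (Fin.consEquiv fun _ ↦ α).sum_comp, Fintype.sum_prod_type]
    simp only [Fin.consEquiv_apply, Fin.prod_univ_succ, Fin.cons_zero, Fin.cons_succ,
      negMulLog_mul, sum_add_distrib, ← sum_mul, ← mul_sum, ← Fintype.sum_pow, hw, one_pow,
      one_mul, ih]
    push_cast
    ring

theorem Fintype.sum_ite_eq_add_card_sub_one_mul {α : Type*} [Fintype α] [DecidableEq α]
    (a₀ : α) (A B : ℝ) :
    ∑ a, (if a = a₀ then A else B) = A + ((Fintype.card α : ℝ) - 1) * B := by
  rw [Fintype.sum_eq_add_sum_compl a₀, if_pos rfl,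
    Finset.sum_congr rfl fun a ha ↦ if_neg (by simpa using ha), Finset.sum_const, card_compl,
    card_singleton, nsmul_eq_mul, Nat.cast_sub (card_pos_iff.mpr ⟨a₀⟩), Nat.cast_one]

theorem binEnt_eq_binEntropy_div_log_two (x : ℝ) : binEnt x = binEntropy x / log 2 := by
  rw [binEntropy_eq_negMulLog_add_negMulLog_one_sub, binEnt, negMulLog, negMulLog, logb, logb]
  ring

theorem Nat.Prime.cast_sub_one_pos {q : ℕ} (hq : q.Prime) : (0 : ℝ) < q - 1 :=
  sub_pos.mpr (Nat.one_lt_cast.mpr hq.one_lt)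

section Noise

variable {q : ℕ} [hq : Fact q.Prime] {ε : ℝ}

theorem sum_ite_zero_zmod (A B : ℝ) :
    ∑ a : ZMod q, (if a = 0 then A else B) = A + ((q : ℝ) - 1) * B := by
  rw [Fintype.sum_ite_eq_add_card_sub_one_mul, ZMod.card]

theorem noiseW_nonneg (hε0 : 0 ≤ ε) (hε1 : ε ≤ 1) (z : ZMod q) : 0 ≤ noiseW q ε z := by
  unfold noiseW
  split_ifs
  · linarith
  · exact div_nonneg hε0 hq.out.cast_sub_one_pos.le

theorem sum_noiseW : ∑ a : ZMod q, noiseW q ε a = 1 := by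
  simp only [noiseW]
  rw [sum_ite_zero_zmod, mul_div_cancel₀ _ hq.out.cast_sub_one_pos.ne']
  ring

theorem sum_negMulLog_noiseW :
    ∑ a : ZMod q, negMulLog (noiseW q ε a) = binEntropy ε + ε * log ((q : ℝ) - 1) := by
  simp only [noiseW, apply_ite negMulLog, sum_ite_zero_zmod,
    binEntropy_eq_negMulLog_add_negMulLog_one_sub]
  rcases eq_or_ne ε 0 with rfl | hε
  · simp
  have hq1 := hq.out.cast_sub_one_pos.ne'
  rw [negMulLog, negMulLog, negMulLog, log_div hε hq1]
  field_simp
  ring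

theorem log_card_add_mul_entropy_le_of_symmetricChannel {α X : Type*} [Fintype α] [Nonempty α]
    [DecidableEq X] (hε0 : 0 ≤ ε) (hε1 : ε ≤ 1) {m : ℕ} (v : α → Fin m → ZMod q) {ι : α → X}
    (hι : Function.Injective ι) (g : (Fin m → ZMod q) → X) :
    log (Fintype.card α) + m * (binEntropy ε + ε * log ((q : ℝ) - 1)) ≤ m * log q + log 2 +
      ((Fintype.card α : ℝ)⁻¹ * ∑ a, ∑ z : Fin m → ZMod q,
        (∏ k, noiseW q ε (z k)) * if g (fun k ↦ v a k + z k) ≠ ι a then 1 else 0) *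
        log (Fintype.card α) := by
  have := log_card_add_sum_negMulLog_le_of_additiveNoise
    (fun z ↦ prod_nonneg fun k _ ↦ noiseW_nonneg hε0 hε1 (z k))
    (by rw [← Fintype.sum_pow, sum_noiseW, one_pow]) v hι g
  rwa [sum_negMulLog_prod_pi sum_noiseW, sum_negMulLog_noiseW, Fintype.card_fun, ZMod.card,
    Fintype.card_fin, Nat.cast_pow, log_pow] at this

end Noise

theorem fano_bound_logb_eq_log (N q ε : ℝ) (m : ℕ) :
    (logb 2 N - m * (logb 2 q - binEnt ε - ε * logb 2 (q - 1)) - 1) / logb 2 N =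
      (log N + m * (binEntropy ε + ε * log (q - 1)) - m * log q - log 2) / log N := by
  have := (log_pos one_lt_two).ne'
  simp only [logb, binEnt_eq_binEntropy_div_log_two]
  field_simp
  ring

theorem le_sum_sum_div_card_mul_card {α κ : Type*} [Fintype α] [Nonempty α] [Fintype κ]
    [Nonempty κ] {c : ℝ} {F : α → κ → ℝ}
    (h : ∀ k, c ≤ (Fintype.card α : ℝ)⁻¹ * ∑ a, F a k) :
    c ≤ (∑ a, ∑ k, F a k) / (Fintype.card α * Fintype.card κ) := by
  have hN : (0 : ℝ) < Fintype.card α := Nat.cast_pos.mpr Fintype.card_pos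
  have hK : (0 : ℝ) < Fintype.card κ := Nat.cast_pos.mpr Fintype.card_pos
  have havg := card_nsmul_le_sum univ _ _ fun k _ ↦ h k
  rw [card_univ, nsmul_eq_mul, ← mul_sum, sum_comm] at havg
  rw [le_div_iff₀ (by positivity)]
  calc c * (Fintype.card α * Fintype.card κ) = Fintype.card α * (Fintype.card κ * c) := by ring
    _ ≤ Fintype.card α * ((Fintype.card α : ℝ)⁻¹ * _) := by gcongr
    _ = _ := mul_inv_cancel_left₀ hN.ne' _

theorem fano_converse_noisy_general (q n d r m : ℕ) [Fact q.Prime]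
    (hcard : 1 < Nat.card {T : Tensor q n d // rankLE q n d r T})
    (ε : ℝ) (hε0 : 0 ≤ ε) (hε1 : ε ≤ 1)
    (f : (Fin m → ZMod q) → (Fin m → Tensor q n d) → Tensor q n d) :
    (∑ Tstar : {T : Tensor q n d // rankLE q n d r T}, ∑ M : Fin m → Tensor q n d,
        ∑ z : Fin m → ZMod q,
          (∏ k, noiseW q ε (z k)) *
            (if f (fun k => tinner (M k) Tstar.1 + z k) M ≠ Tstar.1 then 1 else 0)) /
        ((Nat.card {T : Tensor q n d // rankLE q n d r T} : ℝ) *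
          (Fintype.card (Tensor q n d) : ℝ) ^ m)
      ≥ (Real.logb 2 (Nat.card {T : Tensor q n d // rankLE q n d r T})
          - m * (Real.logb 2 q - binEnt ε - ε * Real.logb 2 ((q : ℝ) - 1)) - 1) /
        Real.logb 2 (Nat.card {T : Tensor q n d // rankLE q n d r T}) := by
  set 𝒯 := {T : Tensor q n d // rankLE q n d r T}
  have : Nonempty 𝒯 := (Nat.card_pos_iff.mp (by omega)).1
  rw [Nat.card_eq_fintype_card] at hcard ⊢
  have hlog : 0 < log (Fintype.card 𝒯) := log_pos (Nat.one_lt_cast.mpr hcard)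
  have hcardM : (Fintype.card (Tensor q n d) : ℝ) ^ m = Fintype.card (Fin m → Tensor q n d) := by
    rw [Fintype.card_fun (α := Fin m), Fintype.card_fin, Nat.cast_pow]
  rw [ge_iff_le, fano_bound_logb_eq_log, hcardM]
  refine le_sum_sum_div_card_mul_card fun M ↦ (div_le_iff₀ hlog).mpr ?_
  have := log_card_add_mul_entropy_le_of_symmetricChannel hε0 hε1
    (fun (T : 𝒯) k ↦ tinner (M k) T.1) Subtype.val_injective (fun y ↦ f y M)
  linarith

/-- **Fano-type converse (noisy).** `T*` is uniform on `𝒯(n;d;r;q)`, the sensing tensors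
are i.i.d. uniform and independent of `T*`, and `ỹ = y_{T*} + z` where the noise symbols
`z_k` are i.i.d. (independent of everything else) with `Pr(z_k = 0) = 1 − ε` and
`Pr(z_k = a) = ε/(q−1)` for `a ≠ 0`.  For every deterministic decoder `f`,
`P_e ≥ (log₂|𝒯| − m·(log₂ q − h₂(ε) − ε·log₂(q−1)) − 1) / log₂|𝒯|`. -/
theorem fano_converse_noisy (q n d r m : ℕ) [Fact q.Prime]
    (hn : 1 ≤ n) (hd : 1 ≤ d) (hr : 1 ≤ r) (hm : 1 ≤ m)
    (hcard : 1 < Nat.card {T : Tensor q n d // rankLE q n d r T})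
    (ε : ℝ) (hε0 : 0 ≤ ε) (hε1 : ε ≤ 1)
    (f : (Fin m → ZMod q) → (Fin m → Tensor q n d) → Tensor q n d) :
    (∑ Tstar : {T : Tensor q n d // rankLE q n d r T}, ∑ M : Fin m → Tensor q n d,
        ∑ z : Fin m → ZMod q,
          (∏ k, noiseW q ε (z k)) *
            (if f (fun k => tinner (M k) Tstar.1 + z k) M ≠ Tstar.1 then 1 else 0)) /
        ((Nat.card {T : Tensor q n d // rankLE q n d r T} : ℝ) *
          (Fintype.card (Tensor q n d) : ℝ) ^ m)
      ≥ (Real.logb 2 (Nat.card {T : Tensor q n d // rankLE q n d r T})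
          - m * (Real.logb 2 q - binEnt ε - ε * Real.logb 2 ((q : ℝ) - 1)) - 1) /
        Real.logb 2 (Nat.card {T : Tensor q n d // rankLE q n d r T}) :=
  fano_converse_noisy_general q n d r m hcard ε hε0 hε1 f
end
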